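/- arXiv:2205.01266 — 3 statements merged into one kernel-verified Lean document; each statement's English description precedes it below -/
import Mathlib

section
/- Let (W,S) be any Coxeter system, J ⊆ S, and ξ ∈ W. The map ρ_ξ : W_J → W defined by ρ_ξ(u) = uξ⁻¹ is a convex embedding with respect to the (left) weak orders if and only if ξ ∈ W^J. -/
/-!
The substance is the exchange property of Coxeter groups. It comes from Tits' sign
representation of `W` on `W × ℤˣ`, in which `s i` conjugates the first coordinate by `s i` and
flips the sign exactly at `s i`: it shows that the parity of the number of occurrences of a
reflection `t` in the left inversion sequence of a word depends only on the element the word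
represents. Hence a left descent `s i` of `π ω` occurs in that sequence, and deleting the
corresponding letter of `ω` gives a word for `s i * π ω`.

With exchange, every reduced word of an element of `W_J` only uses letters of `J`, so `W_J` is a
lower set for the weak order, and the element `m` of minimal length in `ξ W_J` satisfies
`ℓ (m c) = ℓ m + ℓ c` for `c ∈ W_J`. If `ξ ∈ W^J`, then `ξ = m`, so `u ↦ u ξ⁻¹` adds `ℓ ξ` to the
length on `W_J`; this makes it an order embedding, and convexity follows from the lower-set
property. Conversely, `1 ≤ s i` forces `ξ⁻¹ ≤ s i ξ⁻¹`, that is `ℓ ξ < ℓ (ξ s i)`.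
-/

/-- The left weak order on a Coxeter group: `u ≤ v` iff `ℓ(v) = ℓ(u) + ℓ(v u⁻¹)`. -/
def CoxeterSystem.weakLE {B : Type*} {W : Type*} [Group W] {M : CoxeterMatrix B}
    (cs : CoxeterSystem M W) (u v : W) : Prop :=
  cs.length v = cs.length u + cs.length (v * u⁻¹)

namespace CoxeterSystem

open List

variable {B W : Type*} [Group W] {M : CoxeterMatrix B} (cs : CoxeterSystem M W)

local prefix:100 "s" => cs.simple
local prefix:100 "π" => cs.wordProd
local prefix:100 "ℓ" => cs.length
local prefix:100 "lis " => cs.leftInvSeq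

theorem simple_mul_mul_simple_eq_simple_iff (i : B) (t : W) : s i * t * s i = s i ↔ t = s i := by
  rw [mul_eq_right, mul_eq_one_iff_eq_inv', cs.inv_simple]

theorem prod_map_alternatingWord_two_mul {G : Type*} [Monoid G] (f : B → G) (i j : B) (n : ℕ) :
    ((alternatingWord i j (2 * n)).map f).prod = (f i * f j) ^ n := by
  induction n with
  | zero => simp [alternatingWord]
  | succ n ih =>
    rw [show 2 * (n + 1) = 2 * n + 1 + 1 by ring, alternatingWord_succ', alternatingWord_succ',
      if_neg (by simp [parity_simps]), if_pos (even_two_mul n)]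
    simp [ih, pow_succ', mul_assoc]

section ParityRepresentation

variable [DecidableEq W]

def parityAction (i : B) (p : W × ℤˣ) : W × ℤˣ :=
  (s i * p.1 * s i, if p.1 = s i then -p.2 else p.2)

theorem parityAction_involutive (i : B) : Function.Involutive (cs.parityAction i) := by
  rintro ⟨t, ε⟩
  have hconj : s i * (s i * t * s i) * s i = t := by
    simp [mul_assoc, simple_mul_simple_cancel_left]
  by_cases ht : t = s i
  · simp [parityAction, ht]
  · have ht' : s i * t * s i ≠ s i := (cs.simple_mul_mul_simple_eq_simple_iff i t).not.mpr ht
    simp only [parityAction, if_neg ht, if_neg ht', hconj]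

def parityPerm (i : B) : Equiv.Perm (W × ℤˣ) := (cs.parityAction_involutive i).toPerm

theorem inv_prod_map_parityPerm_apply (ω : List B) (t : W) (ε : ℤˣ) :
    (ω.map cs.parityPerm).prod⁻¹ (t, ε) = ((π ω)⁻¹ * t * π ω, (-1) ^ (lis ω).count t * ε) := by
  induction ω generalizing t ε with
  | nil => simp
  | cons i ω ih =>
    have hinv : (cs.parityPerm i)⁻¹ = cs.parityPerm i :=
      Function.Involutive.toPerm_symm _
    have hcount : (lis ω).count (s i * t * s i) = ((lis ω).map (MulAut.conj (s i))).count t := by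
      conv_rhs => rw [show t = MulAut.conj (s i) (s i * t * s i) by
        simp [mul_assoc, simple_mul_simple_cancel_left]]
      exact (count_map_of_injective _ _ (MulEquiv.injective _) _).symm
    rw [map_cons, prod_cons, mul_inv_rev, Equiv.Perm.mul_apply, hinv]
    simp only [parityPerm, Function.Involutive.coe_toPerm, parityAction]
    rw [ih, hcount, wordProd_cons, leftInvSeq, count_cons]
    by_cases ht : t = s i
    · simp [ht, pow_succ, mul_assoc]
    · simp [ht, Ne.symm ht, mul_assoc]

/-- The `k`-th entry of this inversion sequence is `π (alternatingWord j i (2 * k + 1))`, which has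
period `M i j` in `k` because `(s j * s i) ^ M i j = 1`. -/
theorem even_count_leftInvSeq_alternatingWord (i j : B) (t : W) :
    Even ((lis (alternatingWord i j (2 * M i j))).count t) := by
  set g : ℕ → W := fun k ↦ π (alternatingWord j i (2 * k + 1))
  have hper : ∀ k, g (M i j + k) = g k := fun k ↦ by
    have h1 : (2 * (M i j + k) + 1) / 2 = M i j + k := by omega
    have h2 : (2 * k + 1) / 2 = k := by omega
    simp [g, prod_alternatingWord_eq_mul_pow, h1, h2, pow_add, simple_mul_simple_pow']
  have hlis : lis (alternatingWord i j (2 * M i j)) = (range (2 * M i j)).map g :=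
    ext_getElem (by simp) fun k hk _ ↦ by
      simp only [getElem_leftInvSeq_alternatingWord cs i j _ k (by simpa using hk), g,
        getElem_map, getElem_range]
  rw [hlis, two_mul, range_add, map_append, map_map, Function.comp_def, funext hper, count_append]
  exact ⟨_, rfl⟩

theorem isLiftable_parityPerm : M.IsLiftable cs.parityPerm := by
  intro i j
  rw [← inv_eq_one]
  have hπ : π (alternatingWord i j (2 * M i j)) = 1 := by
    simp [prod_alternatingWord_eq_mul_pow, simple_mul_simple_pow]
  ext ⟨t, ε⟩ : 1
  obtain ⟨n, hn⟩ := cs.even_count_leftInvSeq_alternatingWord i j t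
  rw [← prod_map_alternatingWord_two_mul, inv_prod_map_parityPerm_apply, hπ, hn, ← two_mul,
    pow_mul]
  simp

def parityRep : W →* Equiv.Perm (W × ℤˣ) := cs.lift ⟨cs.parityPerm, cs.isLiftable_parityPerm⟩

theorem parityRep_wordProd (ω : List B) : cs.parityRep (π ω) = (ω.map cs.parityPerm).prod := by
  simp [parityRep, wordProd, map_list_prod, Function.comp_def, lift_apply_simple]

theorem neg_one_pow_count_leftInvSeq_eq {ω ω' : List B} (h : π ω = π ω') (t : W) :
    (-1 : ℤˣ) ^ (lis ω).count t = (-1) ^ (lis ω').count t := by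
  have := congrArg (fun w ↦ ((cs.parityRep w)⁻¹ (t, 1)).2) h
  simpa [parityRep_wordProd, inv_prod_map_parityPerm_apply] using this

end ParityRepresentation

theorem simple_mem_leftInvSeq_of_isLeftDescent {ω : List B} {i : B}
    (h : cs.IsLeftDescent (π ω) i) : s i ∈ lis ω := by
  classical
  obtain ⟨τ, hτ, hτω⟩ := cs.exists_isReduced (s i * π ω)
  have hnotMem : s i ∉ lis τ := fun hmem ↦ by
    have := (cs.isLeftInversion_of_mem_leftInvSeq hτ hmem).2
    rw [← hτω, simple_mul_simple_cancel_left] at this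
    exact lt_asymm h this
  have hcount : (lis (i :: τ)).count (s i) = 1 := by
    have hconj := count_map_of_injective (lis τ) _ (MulAut.conj (s i)).injective (s i)
    rw [MulAut.conj_apply, mul_inv_cancel_right] at hconj
    rw [leftInvSeq, count_cons, hconj, count_eq_zero.mpr hnotMem]
    simp
  have hπ : π (i :: τ) = π ω := by rw [wordProd_cons, ← hτω, simple_mul_simple_cancel_left]
  have hsign := cs.neg_one_pow_count_leftInvSeq_eq hπ (s i)
  rw [← count_pos_iff, Nat.pos_iff_ne_zero]
  intro h0
  rw [hcount, h0] at hsign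
  exact absurd hsign (by decide)

theorem exists_eraseIdx_of_isLeftDescent {ω : List B} {i : B} (h : cs.IsLeftDescent (π ω) i) :
    ∃ k < ω.length, s i * π ω = π (ω.eraseIdx k) := by
  obtain ⟨k, hk, hks⟩ := getElem_of_mem (cs.simple_mem_leftInvSeq_of_isLeftDescent h)
  refine ⟨k, by simpa using hk, ?_⟩
  rw [← getD_leftInvSeq_mul_wordProd, getD_eq_getElem _ _ hk, hks]

theorem exists_sublist_of_isRightDescent {ω : List B} {i : B} (h : cs.IsRightDescent (π ω) i) :
    ∃ ω', ω' <+ ω ∧ ω'.length + 1 = ω.length ∧ π ω * s i = π ω' := by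
  rw [← isLeftDescent_inv_iff, ← wordProd_reverse] at h
  obtain ⟨k, hk, hki⟩ := cs.exists_eraseIdx_of_isLeftDescent h
  refine ⟨(ω.reverse.eraseIdx k).reverse, ?_, ?_, ?_⟩
  · simpa using (ω.reverse.eraseIdx_sublist k).reverse
  · rw [length_reverse, length_eraseIdx_of_lt hk, length_reverse]
    rw [length_reverse] at hk
    omega
  · rw [wordProd_reverse, ← hki, wordProd_reverse, mul_inv_rev, inv_simple, inv_inv]

theorem exists_isReduced_sublist_of_mul_simple {ω : List B} (hω : cs.IsReduced ω) (i : B) :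
    ∃ ω', cs.IsReduced ω' ∧ ω' <+ ω ++ [i] ∧ π ω * s i = π ω' := by
  by_cases hi : cs.IsRightDescent (π ω) i
  · obtain ⟨ω', hsub, hlen, hprod⟩ := cs.exists_sublist_of_isRightDescent hi
    refine ⟨ω', ?_, hsub.trans (sublist_append_left ω [i]), hprod⟩
    rw [isRightDescent_iff, hprod, hω.eq] at hi
    rw [IsReduced]
    omega
  · refine ⟨ω ++ [i], ?_, Sublist.refl _, by rw [wordProd_append, wordProd_singleton]⟩
    rw [not_isRightDescent_iff, hω.eq] at hi
    rw [IsReduced, wordProd_append, wordProd_singleton, hi, length_append, length_singleton]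

theorem isRightDescent_or_exists_of_isRightDescent_mul {x y : W} {i : B}
    (h : cs.IsRightDescent (x * y) i) :
    cs.IsRightDescent y i ∨ ∃ x', ℓ x' < ℓ x ∧ x * y * s i = x' * y := by
  obtain ⟨ρ, hρ, rfl⟩ := cs.exists_isReduced x
  obtain ⟨τ, hτ, rfl⟩ := cs.exists_isReduced y
  rw [← wordProd_append] at h
  obtain ⟨ω', hsub, hlen, hprod⟩ := cs.exists_sublist_of_isRightDescent h
  obtain ⟨ρ', τ', rfl, hρ', hτ'⟩ := sublist_append_iff.mp hsub
  have hρlen := hρ'.length_le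
  have hτlen := hτ'.length_le
  rw [length_append, length_append] at hlen
  rw [wordProd_append, wordProd_append] at hprod
  by_cases hτeq : τ'.length = τ.length
  · obtain rfl := hτ'.eq_of_length hτeq
    refine Or.inr ⟨π ρ', ?_, hprod⟩
    have := cs.length_wordProd_le ρ'
    rw [hρ.eq]
    omega
  · obtain rfl := hρ'.eq_of_length (by omega)
    left
    rw [mul_assoc] at hprod
    have := cs.length_wordProd_le τ'
    rw [IsRightDescent, mul_left_cancel hprod, hτ.eq]
    omega

section Parabolic

variable {J : Set B}

local notation "W_J" => Subgroup.closure (cs.simple '' J)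

theorem simple_mem_closure {i : B} (hi : i ∈ J) : s i ∈ W_J :=
  Subgroup.subset_closure ⟨i, hi, rfl⟩

theorem wordProd_mem_closure {ω : List B} (hω : ∀ b ∈ ω, b ∈ J) : π ω ∈ W_J :=
  Subgroup.list_prod_mem _ <| by
    simpa [forall_mem_map] using fun b hb ↦ cs.simple_mem_closure (hω b hb)

theorem exists_isReduced_of_mem_closure {w : W} (hw : w ∈ W_J) :
    ∃ ω, (∀ b ∈ ω, b ∈ J) ∧ cs.IsReduced ω ∧ w = π ω := by
  have step : ∀ w, (∃ ω, (∀ b ∈ ω, b ∈ J) ∧ cs.IsReduced ω ∧ w = π ω) → ∀ i ∈ J,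
      ∃ ω, (∀ b ∈ ω, b ∈ J) ∧ cs.IsReduced ω ∧ w * s i = π ω := by
    rintro _ ⟨ω, hωJ, hω, rfl⟩ i hi
    obtain ⟨ω', hω', hsub, hprod⟩ := cs.exists_isReduced_sublist_of_mul_simple hω i
    refine ⟨ω', fun b hb ↦ ?_, hω', hprod⟩
    rcases mem_append.mp (hsub.subset hb) with hb | hb
    · exact hωJ b hb
    · exact (mem_singleton.mp hb) ▸ hi
  induction hw using Subgroup.closure_induction_right with
  | one => exact ⟨[], by simp, by simp [IsReduced], rfl⟩
  | mul_right w _ _ hy ih =>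
    obtain ⟨i, hi, rfl⟩ := hy
    exact step w ih i hi
  | mul_inv_cancel w _ _ hy ih =>
    obtain ⟨i, hi, rfl⟩ := hy
    rw [inv_simple]
    exact step w ih i hi

theorem mul_simple_mem_closure_of_isRightDescent {w : W} {i : B} (hw : w ∈ W_J)
    (h : cs.IsRightDescent w i) : w * s i ∈ W_J := by
  obtain ⟨ω, hωJ, -, rfl⟩ := cs.exists_isReduced_of_mem_closure hw
  obtain ⟨ω', hsub, -, hprod⟩ := cs.exists_sublist_of_isRightDescent h
  exact hprod ▸ cs.wordProd_mem_closure fun b hb ↦ hωJ b (hsub.subset hb)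

theorem exists_mem_isRightDescent_of_mem_closure {w : W} (hw : w ∈ W_J) (hne : w ≠ 1) :
    ∃ i ∈ J, cs.IsRightDescent w i := by
  obtain ⟨ω, hωJ, hω, rfl⟩ := cs.exists_isReduced_of_mem_closure hw
  obtain ⟨τ, i, rfl⟩ := (eq_nil_or_concat ω).resolve_left (by rintro rfl; exact hne rfl)
  refine ⟨i, hωJ i (by simp), ?_⟩
  have := cs.length_wordProd_le τ
  rw [IsRightDescent, wordProd_concat, simple_mul_simple_cancel_right, ← wordProd_concat, hω.eq,
    length_concat]
  omega

theorem mem_closure_of_weakLE {u v : W} (h : cs.weakLE u v) (hv : v ∈ W_J) : u ∈ W_J := by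
  induction hn : ℓ u using Nat.strong_induction_on generalizing u v with
  | _ n ih =>
    by_cases hu : u = 1
    · exact hu ▸ one_mem _
    obtain ⟨i, hi⟩ := cs.exists_rightDescent_of_ne_one hu
    rw [isRightDescent_iff] at hi
    rw [weakLE] at h
    have hvi : cs.IsRightDescent v i := by
      have := cs.length_mul_le (v * u⁻¹) (u * s i)
      rw [← mul_assoc, inv_mul_cancel_right] at this
      rw [IsRightDescent]
      omega
    have hvJ := cs.mul_simple_mem_closure_of_isRightDescent hv hvi
    have hsi : s i ∈ W_J := by simpa using mul_mem (inv_mem hv) hvJ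
    have hweak : cs.weakLE (u * s i) (v * s i) := by
      rw [isRightDescent_iff] at hvi
      rw [weakLE, mul_inv_rev, inv_simple, mul_assoc, simple_mul_simple_cancel_left]
      omega
    simpa [simple_mul_simple_cancel_right] using mul_mem (ih _ (by omega) hweak hvJ rfl) hsi

theorem length_mul_eq_add_of_forall_length_le {m c : W} (hmin : ∀ d ∈ W_J, ℓ m ≤ ℓ (m * d))
    (hc : c ∈ W_J) : ℓ (m * c) = ℓ m + ℓ c := by
  induction hn : ℓ c using Nat.strong_induction_on generalizing c with
  | _ n ih =>
    by_cases hc1 : c = 1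
    · subst hc1
      simp [← hn]
    obtain ⟨i, hiJ, hi⟩ := cs.exists_mem_isRightDescent_of_mem_closure hc hc1
    have hci : c * s i ∈ W_J := mul_mem hc (cs.simple_mem_closure hiJ)
    rw [isRightDescent_iff] at hi
    have hadd := ih _ (by omega) hci rfl
    have hmc : m * c = m * (c * s i) * s i := by rw [← mul_assoc, simple_mul_simple_cancel_right]
    by_cases hdesc : cs.IsRightDescent (m * (c * s i)) i
    · exfalso
      rcases cs.isRightDescent_or_exists_of_isRightDescent_mul hdesc with hci' | ⟨x, hx, hxeq⟩
      · rw [IsRightDescent, simple_mul_simple_cancel_right] at hci'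
        omega
      · have hd : c * (c * s i)⁻¹ ∈ W_J := mul_mem hc (inv_mem hci)
        have := hmin _ hd
        rw [← mul_assoc, hmc, hxeq, mul_inv_cancel_right] at this
        omega
    · rw [not_isRightDescent_iff] at hdesc
      rw [hmc, hdesc, hadd]
      omega

theorem length_mul_eq_add_of_forall_lt_length_mul_simple {ξ c : W}
    (hξ : ∀ i ∈ J, ℓ ξ < ℓ (ξ * s i)) (hc : c ∈ W_J) : ℓ (ξ * c) = ℓ ξ + ℓ c := by
  obtain ⟨c₀, hc₀, hmin⟩ : ∃ c₀ ∈ W_J, ∀ d ∈ W_J, ℓ (ξ * c₀) ≤ ℓ (ξ * d) :=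
    ⟨_, Function.argminOn_mem _ (W_J : Set W) ⟨1, one_mem _⟩,
      fun d hd ↦ Function.argminOn_le (fun d ↦ ℓ (ξ * d)) (W_J : Set W) hd⟩
  have hadd : ∀ d ∈ W_J, ℓ (ξ * c₀ * d) = ℓ (ξ * c₀) + ℓ d := fun d hd ↦
    cs.length_mul_eq_add_of_forall_length_le
      (fun d hd ↦ by rw [mul_assoc]; exact hmin _ (mul_mem hc₀ hd)) hd
  obtain rfl : c₀ = 1 := by
    by_contra hne
    obtain ⟨i, hiJ, hi⟩ :=
      cs.exists_mem_isRightDescent_of_mem_closure (inv_mem hc₀) (inv_ne_one.mpr hne)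
    have h1 := hadd _ (inv_mem hc₀)
    have h2 := hadd _ (mul_mem (inv_mem hc₀) (cs.simple_mem_closure hiJ))
    rw [mul_inv_cancel_right] at h1
    rw [← mul_assoc, mul_inv_cancel_right] at h2
    have := hξ i hiJ
    rw [IsRightDescent] at hi
    omega
  simpa using hadd c hc

theorem length_mul_inv_eq_add {ξ u : W} (hξ : ∀ i ∈ J, ℓ ξ < ℓ (ξ * s i)) (hu : u ∈ W_J) :
    ℓ (u * ξ⁻¹) = ℓ u + ℓ ξ := by
  rw [← length_inv, mul_inv_rev, inv_inv,
    cs.length_mul_eq_add_of_forall_lt_length_mul_simple hξ (inv_mem hu), length_inv, add_comm]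

theorem weakLE_mul_inv_iff {ξ u v : W} (hξ : ∀ i ∈ J, ℓ ξ < ℓ (ξ * s i)) (hu : u ∈ W_J)
    (hv : v ∈ W_J) : cs.weakLE (u * ξ⁻¹) (v * ξ⁻¹) ↔ cs.weakLE u v := by
  rw [weakLE, weakLE, mul_inv_rev, inv_inv, ← mul_assoc, inv_mul_cancel_right,
    cs.length_mul_inv_eq_add hξ hu, cs.length_mul_inv_eq_add hξ hv]
  omega

theorem exists_eq_mul_inv_of_weakLE_of_weakLE {ξ u v x : W} (hξ : ∀ i ∈ J, ℓ ξ < ℓ (ξ * s i))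
    (hu : u ∈ W_J) (hv : v ∈ W_J) (hux : cs.weakLE (u * ξ⁻¹) x) (hxv : cs.weakLE x (v * ξ⁻¹)) :
    ∃ b ∈ W_J, x = b * ξ⁻¹ := by
  refine ⟨x * ξ, cs.mem_closure_of_weakLE ?_ hv, by group⟩
  rw [weakLE, mul_inv_rev, inv_inv, ← mul_assoc, cs.length_mul_inv_eq_add hξ hu] at hux
  rw [weakLE, cs.length_mul_inv_eq_add hξ hv] at hxv
  have h1 := cs.length_le_length_mul_add_right (x * ξ) u⁻¹
  have h2 := cs.length_le_length_mul_add_right v (x * ξ)⁻¹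
  rw [length_inv] at h1 h2
  rw [mul_inv_rev, ← mul_assoc] at h2
  rw [weakLE, mul_inv_rev, ← mul_assoc]
  omega

end Parabolic

theorem lt_length_mul_simple_of_weakLE {ξ : W} {i : B} (h : cs.weakLE ξ⁻¹ (s i * ξ⁻¹)) :
    ℓ ξ < ℓ (ξ * s i) := by
  rw [weakLE, inv_inv, inv_mul_cancel_right, length_inv, length_simple] at h
  rw [← cs.length_inv (ξ * s i), mul_inv_rev, inv_simple, h]
  exact lt_add_one _

end CoxeterSystem

/-- For a Coxeter system `(W,S)`, `J ⊆ S` and `ξ ∈ W`, the map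
`ρ_ξ : W_J → W`, `u ↦ u ξ⁻¹`, is a convex embedding for the weak orders iff
`ξ ∈ W^J = {w : ℓ(w) < ℓ(w s) for all s ∈ J}`. -/
theorem convex_embedding_iff_min_coset_rep {B : Type*} {W : Type*} [Group W]
    {M : CoxeterMatrix B} (cs : CoxeterSystem M W) (J : Set B) (ξ : W) :
    (Set.InjOn (fun u => u * ξ⁻¹)
        (Subgroup.closure (cs.simple '' J) : Subgroup W) ∧
     (∀ u ∈ (Subgroup.closure (cs.simple '' J) : Subgroup W),
       ∀ v ∈ (Subgroup.closure (cs.simple '' J) : Subgroup W),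
        (cs.weakLE u v ↔ cs.weakLE (u * ξ⁻¹) (v * ξ⁻¹))) ∧
     (∀ u ∈ (Subgroup.closure (cs.simple '' J) : Subgroup W),
       ∀ v ∈ (Subgroup.closure (cs.simple '' J) : Subgroup W),
        ∀ x : W, cs.weakLE (u * ξ⁻¹) x → cs.weakLE x (v * ξ⁻¹) →
          ∃ b ∈ (Subgroup.closure (cs.simple '' J) : Subgroup W), x = b * ξ⁻¹))
    ↔ ∀ i ∈ J, cs.length ξ < cs.length (ξ * cs.simple i) := by
  constructor
  · rintro ⟨-, horder, -⟩ i hi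
    have h1 : cs.weakLE 1 (cs.simple i) := by simp [CoxeterSystem.weakLE]
    apply cs.lt_length_mul_simple_of_weakLE
    simpa using (horder 1 (one_mem _) _ (cs.simple_mem_closure hi)).mp h1
  · intro hξ
    exact ⟨fun a _ b _ hab ↦ mul_right_cancel hab,
      fun u hu v hv ↦ (cs.weakLE_mul_inv_iff hξ hu hv).symm,
      fun u hu v hv x ↦ cs.exists_eq_mul_inv_of_weakLE_of_weakLE hξ hu hv⟩
end

section
/- Let u ≤ v in the weak order on B_n. Then for any integers i, j with 1 ≤ i < j ≤ n, sts(u_i u_{i+1}⋯u_j) ≤ sts(v_i v_{i+1}⋯v_j) in the weak order on B_{j−i+1}. -/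
open Finset

open scoped Classical

/-- The hyperoctahedral group `𝔅ₙ`, realized as the set of those permutations `w` of `ℤ`
that satisfy `w (-i) = - w i` for all `i` and fix every integer of absolute value `> n`.
One-line notation: `w₁ ⋯ w_n` with `w_i = w i` for `1 ≤ i ≤ n`. -/
def SignedPerm (n : ℕ) : Set (Equiv.Perm ℤ) :=
  {w | (∀ i : ℤ, w (-i) = - w i) ∧ (∀ i : ℤ, (n : ℤ) < |i| → w i = i)}

/-- The inversion set `Inv(w) = {(i,j) : 1 ≤ i < j ≤ n, w_i > w_j}`. -/
noncomputable def InvSet (n : ℕ) (w : Equiv.Perm ℤ) : Finset (ℤ × ℤ) :=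
  ((Finset.Icc (1 : ℤ) (n : ℤ)) ×ˢ (Finset.Icc (1 : ℤ) (n : ℤ))).filter
    fun p => p.1 < p.2 ∧ w p.2 < w p.1

/-- The set of negative indices `Nega(w) = {i ∈ [n] : w_i < 0}`. -/
noncomputable def NegaSet (n : ℕ) (w : Equiv.Perm ℤ) : Finset ℤ :=
  (Finset.Icc (1 : ℤ) (n : ℤ)).filter fun i => w i < 0

/-- The negative sum pair set `Nsp(w) = {(i,j) : 1 ≤ i < j ≤ n, w_i + w_j < 0}`. -/
noncomputable def NspSet (n : ℕ) (w : Equiv.Perm ℤ) : Finset (ℤ × ℤ) :=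
  ((Finset.Icc (1 : ℤ) (n : ℤ)) ×ˢ (Finset.Icc (1 : ℤ) (n : ℤ))).filter
    fun p => p.1 < p.2 ∧ w p.1 + w p.2 < 0

/-- The Coxeter length of `w ∈ 𝔅ₙ`: `ℓ(w) = #Inv(w) + #Nega(w) + #Nsp(w)`. -/
noncomputable def blen (n : ℕ) (w : Equiv.Perm ℤ) : ℕ :=
  (InvSet n w).card + (NegaSet n w).card + (NspSet n w).card

/-- The left weak order on `𝔅ₙ`: `u ≤ v` iff `ℓ(v) = ℓ(u) + ℓ(v * u⁻¹)`. -/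
def wle (n : ℕ) (u v : Equiv.Perm ℤ) : Prop :=
  blen n v = blen n u + blen n (v * u⁻¹)

/-- The Coxeter generators of `𝔅ₙ`: `s₀ = (1,-1)` and `sᵢ = (i,i+1)(-i,-(i+1))` for `i ≥ 1`. -/
def sB (i : ℕ) : Equiv.Perm ℤ :=
  if i = 0 then Equiv.swap 1 (-1)
  else Equiv.swap (i : ℤ) ((i : ℤ) + 1) * Equiv.swap (-(i : ℤ)) (-((i : ℤ) + 1))

/-- `a[p] = a + p` if `a > 0`, `a - p` if `a < 0` (and `0 ↦ 0`). -/
def shiftFun (p : ℕ) (b : ℤ) : ℤ :=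
  if 0 < b then b + (p : ℤ) else if b < 0 then b - (p : ℤ) else 0

/-- `w` is the shifted product `u × v ∈ 𝔅_{p+q}` of `u ∈ 𝔅_p` and `v ∈ 𝔅_q`:
its one-line notation is `(u₁, …, u_p, v₁[p], …, v_q[p])`. -/
def IsSProd (p q : ℕ) (u v w : Equiv.Perm ℤ) : Prop :=
  w ∈ SignedPerm (p + q) ∧
  (∀ a : ℤ, 1 ≤ a → a ≤ (p : ℤ) → w a = u a) ∧
  (∀ a : ℤ, (p : ℤ) < a → a ≤ (p : ℤ) + (q : ℤ) → w a = shiftFun p (v (a - (p : ℤ))))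

/-- `ξ` is a `(p,q)`-shuffle: an element of `𝔅_{p+q}` with positive entries (a permutation)
that is increasing on each of the blocks `[1,p]` and `[p+1,p+q]`. -/
def IsShuffle (p q : ℕ) (ξ : Equiv.Perm ℤ) : Prop :=
  ξ ∈ SignedPerm (p + q) ∧
  (∀ a : ℤ, 1 ≤ a → a ≤ (p : ℤ) + (q : ℤ) → 0 < ξ a) ∧
  (∀ a b : ℤ, 1 ≤ a → a < b → b ≤ (p : ℤ) → ξ a < ξ b) ∧
  (∀ a b : ℤ, (p : ℤ) < a → a < b → b ≤ (p : ℤ) + (q : ℤ) → ξ a < ξ b)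

/-- `w` is the standard signed permutation `sts(a₁ ⋯ a_m)` of the word `a₁ ⋯ a_m = a 1, …, a m`
(of nonzero integers): the unique `w ∈ 𝔅_m` with the same negative index set and
`|w_i| < |w_j| ↔ |a_i| ≤ |a_j|` for `1 ≤ i < j ≤ m`. -/
def IsSts (m : ℕ) (a : ℤ → ℤ) (w : Equiv.Perm ℤ) : Prop :=
  w ∈ SignedPerm m ∧
  (∀ i : ℤ, 1 ≤ i → i ≤ (m : ℤ) → (w i < 0 ↔ a i < 0)) ∧
  (∀ i j : ℤ, 1 ≤ i → i < j → j ≤ (m : ℤ) → (|w i| < |w j| ↔ |a i| ≤ |a j|))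

/-- The standard signed permutation of a word, as a function. -/
noncomputable def sts (m : ℕ) (a : ℤ → ℤ) : Equiv.Perm ℤ :=
  if h : ∃ w, IsSts m a w then h.choose else 1

/-- Descent set of `w ∈ 𝔅ₙ`: `Des(w) = {i ∈ [0,n-1] : w_i > w_{i+1}}` with `w₀ = 0`
(note `w 0 = 0` holds automatically). -/
def DesSet (n : ℕ) (w : Equiv.Perm ℤ) : Finset ℕ :=
  (Finset.range n).filter fun i => w ((i : ℤ) + 1) < w (i : ℤ)

/-- Global descent set of `u ∈ 𝔅ₙ`. -/
noncomputable def GDesSet (n : ℕ) (u : Equiv.Perm ℤ) : Finset ℕ :=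
  (Finset.Ico 1 n).filter fun i =>
    ∀ j k : ℤ, 1 ≤ j → j ≤ (i : ℤ) → (i : ℤ) < k → k ≤ (n : ℤ) → u k < u j

/-- `m` is the meet (greatest lower bound) of `x` and `y` within `S`, w.r.t. the weak order. -/
def IsMeetIn (n : ℕ) (S : Set (Equiv.Perm ℤ)) (x y m : Equiv.Perm ℤ) : Prop :=
  m ∈ S ∧ wle n m x ∧ wle n m y ∧ ∀ z ∈ S, wle n z x → wle n z y → wle n z m

/-- `j` is the join (least upper bound) of `x` and `y` within `S`, w.r.t. the weak order. -/
def IsJoinIn (n : ℕ) (S : Set (Equiv.Perm ℤ)) (x y j : Equiv.Perm ℤ) : Prop :=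
  j ∈ S ∧ wle n x j ∧ wle n y j ∧ ∀ z ∈ S, wle n x z → wle n y z → wle n j z

/-- The set `𝔅_p × 𝔅_{q,K} ⊆ 𝔅_{p+q}` of shifted products `u × v` with `u ∈ 𝔅_p`,
`v ∈ 𝔅_q`, `Nega(v) = K`. -/
def SProdComp (p q : ℕ) (K : Finset ℤ) : Set (Equiv.Perm ℤ) :=
  {w | ∃ u v : Equiv.Perm ℤ, u ∈ SignedPerm p ∧ v ∈ SignedPerm q ∧ NegaSet q v = K ∧
        IsSProd p q u v w}

/-- `w` is the iterated shifted product `u⁽¹⁾ × ⋯ × u⁽ᵏ⁾` of the list `us` of signed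
permutations with block sizes given by the list `ps`. -/
def IsMultiSProd (ps : List ℕ) (us : List (Equiv.Perm ℤ)) (w : Equiv.Perm ℤ) : Prop :=
  w ∈ SignedPerm ps.sum ∧ us.length = ps.length ∧
  ∀ i < ps.length,
    us.getD i 1 ∈ SignedPerm (ps.getD i 0) ∧
    ∀ a : ℤ, ((ps.take i).sum : ℤ) < a → a ≤ ((ps.take i).sum : ℤ) + (ps.getD i 0 : ℤ) →
      w a = shiftFun ((ps.take i).sum) ((us.getD i 1) (a - ((ps.take i).sum : ℤ)))

/-- The subset `𝔅_{p₁} × 𝔅_{p₂} × ⋯ × 𝔅_{p_k}` of `𝔅_{p₁+⋯+p_k}`. -/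
def MultiProdSet (ps : List ℕ) : Set (Equiv.Perm ℤ) :=
  {w | ∃ us, IsMultiSProd ps us w}

/-- The `(L₂,…,L_k)`-component `𝔅_{p₁} × 𝔅_{p₂,L₂} × ⋯ × 𝔅_{p_k,L_k}`, where
`Ls.getD (i-1) ∅` is the prescribed negative index set of the `(i+1)`-st factor. -/
def ComponentSet (ps : List ℕ) (Ls : List (Finset ℤ)) : Set (Equiv.Perm ℤ) :=
  {w | ∃ us, IsMultiSProd ps us w ∧
        ∀ i, 1 ≤ i → i < ps.length →
          NegaSet (ps.getD i 0) (us.getD i 1) = Ls.getD (i - 1) ∅}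

/-- `ξ ∈ Sh(p₁,…,p_k)`: a permutation in `𝔅_{p₁+⋯+p_k}` (all entries positive)
increasing on each consecutive block. -/
def IsMultiShuffle (ps : List ℕ) (ξ : Equiv.Perm ℤ) : Prop :=
  ξ ∈ SignedPerm ps.sum ∧
  (∀ a : ℤ, 1 ≤ a → a ≤ (ps.sum : ℤ) → 0 < ξ a) ∧
  ∀ i < ps.length, ∀ a b : ℤ,
    ((ps.take i).sum : ℤ) < a → a < b → b ≤ ((ps.take i).sum : ℤ) + (ps.getD i 0 : ℤ) →
      ξ a < ξ b

/-!
For `w ∈ 𝔅ₙ` let `Rev(w)` be the set of ordered pairs `(a, b)` of positions in `[-n, n]` with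
`b ≠ ±a` whose relative order `w` reverses; it has `4 ℓ(w)` elements. If `v = x u`, then `Rev(v)`
is the symmetric difference of `Rev(u)` and the pullback of `Rev(x)` along `u`, so
`ℓ(v) = ℓ(u) + ℓ(x)` exactly when `Rev(u) ⊆ Rev(v)`.

For `m = j - i + 1`, the signed permutation `sts(u_i ⋯ u_j) ∈ 𝔅_m` is order-isomorphic to `u`
restricted to the positions `±i, …, ±j`, through the odd increasing embedding `r ↦ r ± (i - 1)` of
`[-m, m]` into `[-n, n]`. Hence `Rev(sts(u_i ⋯ u_j))` is the pullback of `Rev(u)` along this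
embedding, and the inclusion `Rev(u) ⊆ Rev(v)` pulls back.
-/

open Equiv
open scoped symmDiff

theorem Finset.card_symmDiff_add_two_mul_card_inter {α : Type*} [DecidableEq α]
    (s t : Finset α) : #(s ∆ t) + 2 * #(s ∩ t) = #s + #t := by
  rw [symmDiff_def, sup_eq_union, card_union_of_disjoint disjoint_sdiff_sdiff]
  have := card_sdiff_add_card_inter s t
  have := card_sdiff_add_card_inter t s
  rw [inter_comm t s] at this
  omega

theorem Finset.card_eq_two_mul_card_filter_of_involutive {α : Type*} {s : Finset α}
    (p : α → Prop) [DecidablePred p] {f : α → α} (hf : Function.Involutive f)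
    (hs : ∀ x ∈ s, f x ∈ s) (hp : ∀ x ∈ s, p (f x) ↔ ¬ p x) :
    #s = 2 * #(s.filter p) := by
  have hswap : #(s.filter fun x => ¬ p x) = #(s.filter p) := by
    refine card_nbij' f f ?_ ?_ (fun x _ => hf x) (fun x _ => hf x) <;>
    · intro x hx
      simp only [coe_filter, Set.mem_ofPred_eq] at hx ⊢
      exact ⟨hs x hx.1, by simp [hp x hx.1, hx.2]⟩
  rw [← card_filter_add_card_filter_not p, hswap, two_mul]

theorem Int.lt_iff_lt_of_sign_eq {x y x' y' : ℤ} (hx : x.sign = x'.sign) (hy : y.sign = y'.sign)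
    (hxy : |x| < |y| ↔ |x'| < |y'|) (hyx : |y| < |x| ↔ |y'| < |x'|) : x < y ↔ x' < y' := by
  have hneg : x < 0 ↔ x' < 0 := by
    rw [← Int.sign_eq_neg_one_iff_neg, hx, Int.sign_eq_neg_one_iff_neg]
  have hpos : 0 < x ↔ 0 < x' := by
    rw [← Int.sign_eq_one_iff_pos, hx, Int.sign_eq_one_iff_pos]
  have kneg : y < 0 ↔ y' < 0 := by
    rw [← Int.sign_eq_neg_one_iff_neg, hy, Int.sign_eq_neg_one_iff_neg]
  have kpos : 0 < y ↔ 0 < y' := by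
    rw [← Int.sign_eq_one_iff_pos, hy, Int.sign_eq_one_iff_pos]
  rcases abs_cases x with ⟨ax, _⟩ | ⟨ax, _⟩ <;> rcases abs_cases y with ⟨ay, _⟩ | ⟨ay, _⟩ <;>
  rcases abs_cases x' with ⟨ax', _⟩ | ⟨ax', _⟩ <;> rcases abs_cases y' with ⟨ay', _⟩ | ⟨ay', _⟩ <;>
  rw [ax, ay, ax', ay'] at hxy hyx <;> omega

theorem Int.sign_eq_sign_of_neg_iff {x y : ℤ} (hx : x ≠ 0) (hy : y ≠ 0) (h : x < 0 ↔ y < 0) :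
    x.sign = y.sign := by
  rcases hx.lt_or_gt with hx | hx <;> rcases hy.lt_or_gt with hy | hy <;>
  simp_all [Int.sign_eq_neg_one_of_neg, Int.sign_eq_one_of_pos]

section oddFunctions

variable {f g : ℤ → ℤ}

theorem Function.Odd.abs_apply_abs (hf : f.Odd) (r : ℤ) : |f (|r|)| = |f r| := by
  rcases abs_choice r with h | h <;> simp [h, hf.eq]

theorem Function.Odd.abs_apply_eq_abs_apply_iff (hf : f.Odd) (hinj : Function.Injective f)
    {a b : ℤ} : |f a| = |f b| ↔ |a| = |b| := by
  simp only [abs_eq_abs, ← hf.eq, hinj.eq_iff]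

theorem Function.Odd.lt_iff_lt (hf : f.Odd) (hg : g.Odd) {m : ℕ}
    (hsign : ∀ t : ℤ, 1 ≤ t → t ≤ m → (f t).sign = (g t).sign)
    (habs : ∀ t t' : ℤ, 1 ≤ t → t ≤ m → 1 ≤ t' → t' ≤ m → (|f t| < |f t'| ↔ |g t| < |g t'|))
    {r s : ℤ} (hr : |r| ≤ m) (hs : |s| ≤ m) : f r < f s ↔ g r < g s := by
  have hsign' : ∀ r : ℤ, |r| ≤ m → (f r).sign = (g r).sign := by
    intro r hr
    rw [abs_le] at hr
    rcases lt_trichotomy r 0 with h | rfl | h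
    · rw [← neg_neg r, hf.eq, hg.eq, Int.sign_neg, Int.sign_neg, hsign (-r) (by omega) (by omega)]
    · rw [hf.map_zero, hg.map_zero]
    · exact hsign r (by omega) (by omega)
  have hzero : ∀ t : ℤ, 1 ≤ t → t ≤ m → (0 < |f t| ↔ 0 < |g t|) := by
    intro t h1 h2
    rw [abs_pos, abs_pos, Ne, Ne, ← Int.sign_eq_zero_iff_zero, hsign t h1 h2,
      Int.sign_eq_zero_iff_zero]
  have habs' : ∀ r s : ℤ, |r| ≤ m → |s| ≤ m → (|f r| < |f s| ↔ |g r| < |g s|) := by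
    intro r s hr hs
    rw [← hf.abs_apply_abs r, ← hf.abs_apply_abs s, ← hg.abs_apply_abs r, ← hg.abs_apply_abs s]
    rcases (abs_nonneg s).eq_or_lt with hs0 | hs0
    · simp only [← hs0, hf.map_zero, hg.map_zero, abs_zero, abs_nonneg, not_lt_of_ge]
    rcases (abs_nonneg r).eq_or_lt with hr0 | hr0
    · simpa only [← hr0, hf.map_zero, hg.map_zero, abs_zero] using hzero |s| hs0 hs
    · exact habs |r| |s| hr0 hr hs0 hs
  exact Int.lt_iff_lt_of_sign_eq (hsign' r hr) (hsign' s hs) (habs' r s hr hs) (habs' s r hs hr)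

end oddFunctions

namespace SignedPerm

variable {n : ℕ} {u w : Perm ℤ}

theorem abs_apply_le_iff (hw : w ∈ SignedPerm n) {a : ℤ} : |w a| ≤ n ↔ |a| ≤ n := by
  constructor
  · intro h
    by_contra ha
    rw [hw.2 a (not_le.1 ha)] at h
    exact ha h
  · intro ha
    by_contra h
    have hfix : w (w a) = w a := hw.2 _ (not_le.1 h)
    rw [w.injective hfix] at h
    exact h ha

theorem inv_mem (hw : w ∈ SignedPerm n) : w⁻¹ ∈ SignedPerm n := by
  refine ⟨fun a => w.injective ?_, fun a ha => w.injective ?_⟩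
  · simp [hw.1]
  · simp [hw.2 a ha]

theorem mul_mem (hu : u ∈ SignedPerm n) (hw : w ∈ SignedPerm n) : w * u ∈ SignedPerm n :=
  ⟨fun a => by simp [hu.1, hw.1], fun a ha => by simp [hu.2 a ha, hw.2 a ha]⟩

end SignedPerm

noncomputable def RevSet (n : ℕ) (w : Perm ℤ) : Finset (ℤ × ℤ) :=
  (Icc (-(n : ℤ)) n ×ˢ Icc (-(n : ℤ)) n).filter
    fun p => p.1 ≠ p.2 ∧ p.1 ≠ -p.2 ∧ (p.1 < p.2 ↔ w p.2 < w p.1)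

theorem mem_revSet {n : ℕ} {w : Perm ℤ} {a b : ℤ} :
    (a, b) ∈ RevSet n w ↔
      |a| ≤ n ∧ |b| ≤ n ∧ a ≠ b ∧ a ≠ -b ∧ (a < b ↔ w b < w a) := by
  simp only [RevSet, mem_filter, mem_product, mem_Icc, ← abs_le, and_assoc]

section card

variable {n : ℕ} {w : Perm ℤ}

theorem card_revSet_quarter (hw : (⇑w).Odd) :
    #(((RevSet n w).filter fun p => p.1 < p.2).filter fun p => 0 < p.1 + p.2) = blen n w := by
  set Q := ((RevSet n w).filter fun p => p.1 < p.2).filter fun p => 0 < p.1 + p.2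
  have hw0 : w 0 = 0 := hw.map_zero
  have hinv : #(Q.filter fun p => 0 < p.1) = #(InvSet n w) := by
    refine card_nbij' id id ?_ ?_ (fun _ _ => rfl) (fun _ _ => rfl) <;>
    · rintro ⟨a, b⟩ h
      simp only [Q, InvSet, mem_coe, mem_filter, mem_revSet, mem_product, mem_Icc,
        abs_le, id] at h ⊢
      omega
  have hnega : #((Q.filter fun p => ¬ 0 < p.1).filter fun p => p.1 = 0) = #(NegaSet n w) := by
    refine card_nbij' Prod.snd (fun b => (0, b)) ?_ ?_ ?_ (fun _ _ => rfl)
    · rintro ⟨a, b⟩ h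
      simp only [Q, NegaSet, mem_coe, mem_filter, mem_revSet, mem_Icc, abs_le] at h ⊢
      obtain ⟨h, rfl⟩ := h
      rw [hw0] at h
      omega
    · intro b h
      simp only [Q, NegaSet, mem_coe, mem_filter, mem_revSet, mem_Icc, abs_le, hw0, and_true] at h ⊢
      omega
    · rintro ⟨a, b⟩ h
      simp only [mem_coe, mem_filter] at h
      simp [h.2]
  have hnsp : #((Q.filter fun p => ¬ 0 < p.1).filter fun p => ¬ p.1 = 0) = #(NspSet n w) := by
    refine card_nbij' (fun p => (-p.1, p.2)) (fun p => (-p.1, p.2)) ?_ ?_ ?_ ?_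
    · rintro ⟨a, b⟩ h
      simp only [Q, NspSet, mem_coe, mem_filter, mem_revSet, mem_product, mem_Icc,
        abs_le, hw.eq] at h ⊢
      omega
    · rintro ⟨a, b⟩ h
      simp only [Q, NspSet, mem_coe, mem_filter, mem_revSet, mem_product, mem_Icc,
        abs_le, hw.eq] at h ⊢
      omega
    all_goals intro p _; simp
  rw [blen, ← hinv, ← hnega, ← hnsp, add_assoc, card_filter_add_card_filter_not,
    card_filter_add_card_filter_not]

theorem card_revSet (hw : (⇑w).Odd) : #(RevSet n w) = 4 * blen n w := by
  rw [card_eq_two_mul_card_filter_of_involutive (fun p : ℤ × ℤ => p.1 < p.2) Prod.swap_swap,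
    card_eq_two_mul_card_filter_of_involutive (fun p : ℤ × ℤ => 0 < p.1 + p.2)
      (f := fun p => (-p.2, -p.1)) (fun p => by simp), card_revSet_quarter hw]
  · ring
  all_goals
    rintro ⟨a, b⟩ h
    simp only [mem_filter, mem_revSet, abs_neg, Prod.swap_prod_mk, hw.eq] at h ⊢
    have := w.injective.ne (show a ≠ b by omega)
    omega

end card

section weakOrder

variable {n : ℕ} {u v : Perm ℤ}

theorem revSet_mul (hu : u ∈ SignedPerm n) (x : Perm ℤ) :
    RevSet n (x * u) = RevSet n u ∆ (RevSet n x).map (u⁻¹.prodCongr u⁻¹).toEmbedding := by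
  ext ⟨a, b⟩
  have hneg : u a ≠ -u b ↔ a ≠ -b := by rw [← hu.1, u.injective.ne_iff]
  simp only [mem_symmDiff, mem_map_equiv, Equiv.prodCongr_symm, Perm.inv_def, Equiv.symm_symm,
    Equiv.prodCongr_apply, Prod.map, mem_revSet, SignedPerm.abs_apply_le_iff hu, u.injective.ne_iff,
    hneg, Perm.mul_apply]
  by_cases hab : a = b
  · simp [hab]
  have := u.injective.ne hab
  constructor <;> intro h <;> omega

theorem wle_iff_revSet_subset (hu : u ∈ SignedPerm n) (hv : v ∈ SignedPerm n) :
    wle n u v ↔ RevSet n u ⊆ RevSet n v := by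
  rw [wle]
  set x := v * u⁻¹
  have hx : x ∈ SignedPerm n := SignedPerm.mul_mem (SignedPerm.inv_mem hu) hv
  set T := (RevSet n x).map (u⁻¹.prodCongr u⁻¹).toEmbedding
  have hvS : RevSet n v = RevSet n u ∆ T := by rw [← revSet_mul hu x]; simp [x]
  have hcard := card_symmDiff_add_two_mul_card_inter (RevSet n u) T
  rw [← hvS, card_map, card_revSet hu.1, card_revSet hv.1, card_revSet hx.1] at hcard
  rw [hvS, le_symmDiff_iff_left, disjoint_iff_inter_eq_empty, ← card_eq_zero]
  omega

end weakOrder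

section pattern

variable {m n : ℕ} {φ : ℤ → ℤ}

theorem mem_revSet_iff_of_pattern (hφ : StrictMono φ) (hφodd : φ.Odd)
    (hφn : ∀ r : ℤ, |r| ≤ m → |φ r| ≤ n) {w p : Perm ℤ}
    (hp : ∀ r s : ℤ, |r| ≤ m → |s| ≤ m → (p r < p s ↔ w (φ r) < w (φ s)))
    {r s : ℤ} (hr : |r| ≤ m) (hs : |s| ≤ m) :
    (r, s) ∈ RevSet m p ↔ (φ r, φ s) ∈ RevSet n w := by
  simp only [mem_revSet, ← hφodd.eq, hφ.injective.ne_iff, hφ.lt_iff_lt, hp s r hs hr, hr, hs,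
    hφn r hr, hφn s hs]

theorem wle_of_pattern (hφ : StrictMono φ) (hφodd : φ.Odd) (hφn : ∀ r : ℤ, |r| ≤ m → |φ r| ≤ n)
    {u v p q : Perm ℤ} (hu : u ∈ SignedPerm n) (hv : v ∈ SignedPerm n)
    (hp : p ∈ SignedPerm m) (hq : q ∈ SignedPerm m)
    (hpu : ∀ r s : ℤ, |r| ≤ m → |s| ≤ m → (p r < p s ↔ u (φ r) < u (φ s)))
    (hqv : ∀ r s : ℤ, |r| ≤ m → |s| ≤ m → (q r < q s ↔ v (φ r) < v (φ s)))
    (huv : wle n u v) : wle m p q := by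
  rw [wle_iff_revSet_subset hu hv] at huv
  rw [wle_iff_revSet_subset hp hq]
  rintro ⟨r, s⟩ h
  obtain ⟨hr, hs, -⟩ := mem_revSet.1 h
  rw [mem_revSet_iff_of_pattern hφ hφodd hφn hpu hr hs] at h
  rw [mem_revSet_iff_of_pattern hφ hφodd hφn hqv hr hs]
  exact huv h

end pattern

theorem IsSts.lt_iff_lt {m : ℕ} {a : ℤ → ℤ} {w p : Perm ℤ} {φ : ℤ → ℤ} (hw : (⇑w).Odd)
    (hφ : Function.Injective φ) (hφodd : φ.Odd) (ha : ∀ t : ℤ, 1 ≤ t → t ≤ m → a t = w (φ t))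
    (hp : IsSts m a p) {r s : ℤ} (hr : |r| ≤ m) (hs : |s| ≤ m) :
    p r < p s ↔ w (φ r) < w (φ s) := by
  have hpodd : (⇑p).Odd := hp.1.1
  have hg : (fun t => w (φ t)).Odd := fun t => by simp only [hφodd.eq, hw.eq]
  have hginj : Function.Injective fun t => w (φ t) := w.injective.comp hφ
  refine hpodd.lt_iff_lt hg (fun t h1 h2 => ?_) (fun t t' h1 h2 h1' h2' => ?_) hr hs
  · have hp0 : p t ≠ 0 := (p.injective.ne (show t ≠ 0 by omega)).trans_eq hpodd.map_zero
    have hw0 : w (φ t) ≠ 0 := (hginj.ne (show t ≠ 0 by omega)).trans_eq hg.map_zero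
    rw [← ha t h1 h2] at hw0 ⊢
    exact Int.sign_eq_sign_of_neg_iff hp0 hw0 (hp.2.1 t h1 h2)
  · have hne : t ≠ t' → |p t| ≠ |p t'| ∧ |a t| ≠ |a t'| := by
      intro htt'
      rw [ha t h1 h2, ha t' h1' h2']
      constructor <;> intro h <;> apply htt'
      · rwa [hpodd.abs_apply_eq_abs_apply_iff p.injective, abs_of_pos h1, abs_of_pos h1'] at h
      · have h := (hg.abs_apply_eq_abs_apply_iff hginj).1 h
        rwa [abs_of_pos h1, abs_of_pos h1'] at h
    rw [← ha t h1 h2, ← ha t' h1' h2']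
    rcases lt_trichotomy t t' with htt' | rfl | htt'
    · rw [hp.2.2 t t' h1 htt' h2', le_iff_lt_or_eq, or_iff_left (hne htt'.ne).2]
    · simp only [lt_irrefl]
    · rw [← not_le, le_iff_lt_or_eq, or_iff_left (hne htt'.ne').1.symm, hp.2.2 t' t h1' htt' h2,
        not_le]

section shiftFun

variable (p : ℕ)

theorem shiftFun_of_pos {b : ℤ} (hb : 0 < b) : shiftFun p b = b + p := by simp [shiftFun, hb]

theorem strictMono_shiftFun : StrictMono (shiftFun p) := by
  intro a b hab
  unfold shiftFun
  split_ifs <;> omega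

theorem shiftFun_odd : (shiftFun p).Odd := by
  intro b
  unfold shiftFun
  split_ifs <;> omega

theorem abs_shiftFun_le {m : ℕ} {b : ℤ} (hb : |b| ≤ m) : |shiftFun p b| ≤ m + p := by
  rw [abs_le] at hb ⊢
  unfold shiftFun
  split_ifs <;> omega

end shiftFun

/-- If `u ≤ v` in the weak order on `𝔅ₙ` and `1 ≤ i < j ≤ n`, then
`sts(u_i ⋯ u_j) ≤ sts(v_i ⋯ v_j)` in the weak order on `𝔅_{j-i+1}`. -/
theorem sts_monotone (n : ℕ) (u v : Equiv.Perm ℤ) (hu : u ∈ SignedPerm n)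
    (hv : v ∈ SignedPerm n) (huv : wle n u v) (i j : ℤ) (h1 : 1 ≤ i) (hij : i < j)
    (hj : j ≤ (n : ℤ)) (su sv : Equiv.Perm ℤ)
    (hsu : IsSts (j - i + 1).toNat (fun r => u (i - 1 + r)) su)
    (hsv : IsSts (j - i + 1).toNat (fun r => v (i - 1 + r)) sv) :
    wle (j - i + 1).toNat su sv := by
  obtain ⟨k, rfl⟩ : ∃ k : ℕ, i = k + 1 := ⟨(i - 1).toNat, by omega⟩
  have hwindow : ∀ r : ℤ, |r| ≤ (j - (k + 1) + 1).toNat → |shiftFun k r| ≤ n :=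
    fun r hr => (abs_shiftFun_le k hr).trans (by omega)
  have hword : ∀ w : Perm ℤ, ∀ t : ℤ, 1 ≤ t → t ≤ (j - (k + 1) + 1).toNat →
      w (k + 1 - 1 + t) = w (shiftFun k t) := fun w t ht _ => by
    rw [shiftFun_of_pos k (by omega)]; ring_nf
  have hφ := strictMono_shiftFun k
  exact wle_of_pattern hφ (shiftFun_odd k) hwindow hu hv hsu.1 hsv.1
    (fun r s hr hs => hsu.lt_iff_lt hu.1 hφ.injective (shiftFun_odd k) (hword u) hr hs)
    (fun r s hr hs => hsv.lt_iff_lt hv.1 hφ.injective (shiftFun_odd k) (hword v) hr hs) huv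
end

section
/- Let w = (u × v)ξ⁻¹ where ξ ∈ Sh(p,q), u ∈ B_p and v ∈ B_q. Then the following disjoint union identities hold: Nega(w) = ξ·Nega(u) ⊎ ξ·(p + Nega(v)); Inv(w) = ξ·Inv(u) ⊎ ξ·((p,p) + Inv(v)) ⊎ ξ·([p] × (p + Nega(v)) ∩ Inv̄(ξ)) ⊎ ξ·((p + Nega̅(v)) × [p] ∩ Ĩnv(ξ)); and Nsp(w) = ξ·Nsp(u) ⊎ ξ·((p,p) + Nsp(v)) ⊎ ξ·([p] × (p + Nega(v)) ∩ Inv̄(ξ)) ⊎ ξ·((p + Nega(v)) × [p] ∩ Ĩnv(ξ)). Here for a set S of indices, ξ·S = {ξ_r : r ∈ S}; for a set S of pairs, ξ·S = {(ξ_r, ξ_s) : (r,s) ∈ S}; p + S = {p + r : r ∈ S}; and (p,p) + S = {(p+r, p+s) : (r,s) ∈ S}. -/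
open Finset

open scoped Classical

/-- `ξ · S` for a set of indices: `{ξ_r : r ∈ S}`. -/
def idxImg (ξ : Equiv.Perm ℤ) (S : Finset ℤ) : Finset ℤ := S.image fun r => ξ r

/-- `p + S = {p + r : r ∈ S}`. -/
def shiftIdx (p : ℕ) (S : Finset ℤ) : Finset ℤ := S.image fun r => r + (p : ℤ)

/-- `ξ · S` for a set of pairs: `{(ξ_r, ξ_s) : (r,s) ∈ S}`. -/
def prImg (ξ : Equiv.Perm ℤ) (S : Finset (ℤ × ℤ)) : Finset (ℤ × ℤ) :=
  S.image fun rs => (ξ rs.1, ξ rs.2)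

/-- `(p,p) + S = {(p+r, p+s) : (r,s) ∈ S}`. -/
def shiftPr (p : ℕ) (S : Finset (ℤ × ℤ)) : Finset (ℤ × ℤ) :=
  S.image fun rs => (rs.1 + (p : ℤ), rs.2 + (p : ℤ))

/-- `Inv̄(w) = {(i,j) : 1 ≤ i < j ≤ n, (i,j) ∉ Inv(w)}`. -/
noncomputable def OInvSet (n : ℕ) (w : Equiv.Perm ℤ) : Finset (ℤ × ℤ) :=
  ((Finset.Icc (1 : ℤ) (n : ℤ)) ×ˢ (Finset.Icc (1 : ℤ) (n : ℤ))).filter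
    fun rs => rs.1 < rs.2 ∧ rs ∉ InvSet n w

/-- `Ĩnv(w) = {(j,i) : (i,j) ∈ Inv(w)}`. -/
noncomputable def TInvSet (n : ℕ) (w : Equiv.Perm ℤ) : Finset (ℤ × ℤ) :=
  (InvSet n w).image Prod.swap

/-- `Nega̅(w) = [n] ∖ Nega(w)`. -/
noncomputable def NegaBar (n : ℕ) (w : Equiv.Perm ℤ) : Finset ℤ :=
  Finset.Icc (1 : ℤ) (n : ℤ) \ NegaSet n w

/-! Relabelling positions by `ξ` reduces everything to `z = u × v`: the pair `(ξ r, ξ s)` is an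
inversion (a negative-sum pair) of `w = z ξ⁻¹` iff `ξ r < ξ s` and `z s < z r` (`z r + z s < 0`).
As `ξ` increases on both blocks `[1, p]` and `(p, p + q]`, a pair inside one block gives an
inversion (negative-sum pair) of `u` or of the shifted `v`. For `r ≤ p < s` we have
`|z r| ≤ p < |z s|`, so both comparisons are decided by the sign of `v (s - p)`. -/

open Equiv

section SignedPerm

variable {n : ℕ} {w : Perm ℤ}

lemma SignedPerm.apply_zero (h : w ∈ SignedPerm n) : w 0 = 0 := by
  have h0 := h.1 0
  rw [neg_zero] at h0
  omega

lemma SignedPerm.abs_apply_le (h : w ∈ SignedPerm n) {i : ℤ} (hi : |i| ≤ n) : |w i| ≤ n := by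
  by_contra hlt
  have hfix : w i = i := w.injective (h.2 _ (not_le.mp hlt))
  exact hlt (by rwa [hfix])

lemma SignedPerm.apply_ne_zero (h : w ∈ SignedPerm n) {i : ℤ} (hi : i ≠ 0) : w i ≠ 0 :=
  fun h0 => hi (w.injective (h0.trans (SignedPerm.apply_zero h).symm))

end SignedPerm

section Membership

variable {n p : ℕ} {w σ : Perm ℤ}

lemma mem_NegaSet {i : ℤ} : i ∈ NegaSet n w ↔ (1 ≤ i ∧ i ≤ n) ∧ w i < 0 := by
  simp only [NegaSet, mem_filter, mem_Icc]

lemma mem_NegaBar {i : ℤ} : i ∈ NegaBar n w ↔ (1 ≤ i ∧ i ≤ n) ∧ ¬ w i < 0 := by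
  simp only [NegaBar, mem_sdiff, mem_Icc, mem_NegaSet]
  tauto

lemma mem_InvSet {i j : ℤ} :
    (i, j) ∈ InvSet n w ↔ (1 ≤ i ∧ i ≤ n) ∧ (1 ≤ j ∧ j ≤ n) ∧ i < j ∧ w j < w i := by
  simp only [InvSet, mem_filter, mem_product, mem_Icc, and_assoc]

lemma mem_NspSet {i j : ℤ} :
    (i, j) ∈ NspSet n w ↔ (1 ≤ i ∧ i ≤ n) ∧ (1 ≤ j ∧ j ≤ n) ∧ i < j ∧ w i + w j < 0 := by
  simp only [NspSet, mem_filter, mem_product, mem_Icc, and_assoc]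

lemma mem_OInvSet {i j : ℤ} :
    (i, j) ∈ OInvSet n w ↔ (1 ≤ i ∧ i ≤ n) ∧ (1 ≤ j ∧ j ≤ n) ∧ i < j ∧ ¬ w j < w i := by
  simp only [OInvSet, mem_filter, mem_product, mem_Icc, mem_InvSet]
  tauto

lemma mem_TInvSet {i j : ℤ} : (i, j) ∈ TInvSet n w ↔ (j, i) ∈ InvSet n w := by
  simp only [TInvSet, mem_image, Prod.exists, Prod.swap_prod_mk, Prod.mk.injEq]
  exact ⟨fun ⟨_, _, h, hj, hi⟩ => hj ▸ hi ▸ h, fun h => ⟨j, i, h, rfl, rfl⟩⟩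

lemma mem_shiftIdx {S : Finset ℤ} {i : ℤ} : i ∈ shiftIdx p S ↔ i - p ∈ S := by
  simp only [shiftIdx, mem_image]
  refine ⟨fun ⟨r, hr, hri⟩ => ?_, fun h => ⟨_, h, sub_add_cancel _ _⟩⟩
  rwa [← hri, add_sub_cancel_right]

lemma mem_shiftPr {S : Finset (ℤ × ℤ)} {i j : ℤ} :
    (i, j) ∈ shiftPr p S ↔ (i - p, j - p) ∈ S := by
  simp only [shiftPr, mem_image, Prod.exists, Prod.mk.injEq]
  refine ⟨fun ⟨r, s, h, hr, hs⟩ => ?_, fun h => ⟨_, _, h, sub_add_cancel _ _, sub_add_cancel _ _⟩⟩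
  rwa [← hr, ← hs, add_sub_cancel_right, add_sub_cancel_right]

lemma mem_idxImg {S : Finset ℤ} {i : ℤ} : i ∈ idxImg σ S ↔ σ⁻¹ i ∈ S := by
  simp only [idxImg, mem_image, Perm.coe_inv]
  refine ⟨fun ⟨r, hr, hri⟩ => ?_, fun h => ⟨_, h, apply_symm_apply _ _⟩⟩
  rwa [← hri, symm_apply_apply]

lemma mem_prImg {S : Finset (ℤ × ℤ)} {i j : ℤ} :
    (i, j) ∈ prImg σ S ↔ (σ⁻¹ i, σ⁻¹ j) ∈ S := by
  simp only [prImg, mem_image, Prod.exists, Prod.mk.injEq, Perm.coe_inv]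
  refine ⟨fun ⟨r, s, h, hr, hs⟩ => ?_,
    fun h => ⟨_, _, h, apply_symm_apply _ _, apply_symm_apply _ _⟩⟩
  rwa [← hr, ← hs, symm_apply_apply, symm_apply_apply]

end Membership

section Relabel

variable {n : ℕ} {σ z : Perm ℤ}

lemma idxImg_union (A B : Finset ℤ) : idxImg σ (A ∪ B) = idxImg σ A ∪ idxImg σ B :=
  image_union _ _

lemma prImg_union (A B : Finset (ℤ × ℤ)) : prImg σ (A ∪ B) = prImg σ A ∪ prImg σ B :=
  image_union _ _

lemma disjoint_idxImg_iff {A B : Finset ℤ} : Disjoint (idxImg σ A) (idxImg σ B) ↔ Disjoint A B :=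
  disjoint_image σ.injective

lemma disjoint_prImg_iff {A B : Finset (ℤ × ℤ)} :
    Disjoint (prImg σ A) (prImg σ B) ↔ Disjoint A B :=
  disjoint_image (Prod.map_injective.2 ⟨σ.injective, σ.injective⟩)

variable (hσ : ∀ i, σ i ∈ Icc (1 : ℤ) n ↔ i ∈ Icc (1 : ℤ) n)
include hσ

lemma inv_apply_mem_Icc_iff (i : ℤ) : σ⁻¹ i ∈ Icc (1 : ℤ) n ↔ i ∈ Icc (1 : ℤ) n := by
  rw [← hσ, Perm.coe_inv, apply_symm_apply]

lemma NegaSet_mul_inv : NegaSet n (z * σ⁻¹) = idxImg σ (NegaSet n z) := by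
  ext i
  rw [NegaSet, mem_filter, mem_idxImg, NegaSet, mem_filter, inv_apply_mem_Icc_iff hσ,
    Perm.mul_apply]

lemma InvSet_mul_inv :
    InvSet n (z * σ⁻¹) = prImg σ ((Icc (1 : ℤ) n ×ˢ Icc (1 : ℤ) n).filter
      fun rs => σ rs.1 < σ rs.2 ∧ z rs.2 < z rs.1) := by
  ext ⟨i, j⟩
  rw [InvSet, mem_filter, mem_prImg, mem_filter]
  simp only [mem_product, inv_apply_mem_Icc_iff hσ]
  simp only [Perm.mul_apply, Perm.coe_inv, apply_symm_apply]

lemma NspSet_mul_inv :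
    NspSet n (z * σ⁻¹) = prImg σ ((Icc (1 : ℤ) n ×ˢ Icc (1 : ℤ) n).filter
      fun rs => σ rs.1 < σ rs.2 ∧ z rs.1 + z rs.2 < 0) := by
  ext ⟨i, j⟩
  rw [NspSet, mem_filter, mem_prImg, mem_filter]
  simp only [mem_product, inv_apply_mem_Icc_iff hσ]
  simp only [Perm.mul_apply, Perm.coe_inv, apply_symm_apply]

end Relabel

section ShuffledProduct

variable {p q : ℕ} {ξ u v z : Perm ℤ}

lemma IsShuffle.apply_mem_Icc_iff (hξ : IsShuffle p q ξ) (i : ℤ) :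
    ξ i ∈ Icc (1 : ℤ) ↑(p + q) ↔ i ∈ Icc (1 : ℤ) ↑(p + q) := by
  simp only [mem_Icc]
  constructor
  · intro hi
    by_contra hout
    rcases lt_trichotomy i 0 with hneg | rfl | hpos
    · by_cases hle : -i ≤ ↑(p + q)
      · have hpos := hξ.2.1 (-i) (by omega) (by omega)
        rw [hξ.1.1] at hpos
        omega
      · have hfix := hξ.1.2 i (by rw [abs_of_neg hneg]; omega)
        omega
    · rw [SignedPerm.apply_zero hξ.1] at hi
      omega
    · have hfix := hξ.1.2 i (by rw [abs_of_pos hpos]; omega)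
      omega
  · intro hi
    have hpos := hξ.2.1 i hi.1 (by omega)
    have hle := abs_le.mp (SignedPerm.abs_apply_le hξ.1 (i := i) (abs_le.mpr ⟨by omega, hi.2⟩))
    omega

lemma IsShuffle.apply_lt_apply_iff (hξ : IsShuffle p q ξ) {r s : ℤ}
    (hr : 1 ≤ r ∧ r ≤ ↑(p + q)) (hs : 1 ≤ s ∧ s ≤ ↑(p + q)) (hblock : r ≤ p ↔ s ≤ p) :
    ξ r < ξ s ↔ r < s := by
  have mono : ∀ a b : ℤ, 1 ≤ a → b ≤ ↑(p + q) → (a ≤ p ↔ b ≤ p) → a < b → ξ a < ξ b :=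
    fun a b ha hb hab h => if ha' : a ≤ p then hξ.2.2.1 a b ha h (hab.mp ha')
      else hξ.2.2.2 a b (by omega) h (by omega)
  refine ⟨fun h => ?_, mono r s hr.1 hs.2 hblock⟩
  rcases lt_trichotomy r s with hlt | rfl | hgt
  · exact hlt
  · exact absurd h (lt_irrefl _)
  · exact absurd (mono s r hs.1 hr.2 hblock.symm hgt) (lt_asymm h)

lemma IsSProd.apply_cases (hz : IsSProd p q u v z) (hu : u ∈ SignedPerm p)
    (hv : v ∈ SignedPerm q) {r : ℤ} (h1 : 1 ≤ r) (h2 : r ≤ ↑(p + q)) :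
    (r ≤ p ∧ z r = u r ∧ -(p : ℤ) ≤ u r ∧ u r ≤ p) ∨
      (p < r ∧ 0 < v (r - p) ∧ z r = v (r - p) + p) ∨
      (p < r ∧ v (r - p) < 0 ∧ z r = v (r - p) - p) := by
  rcases le_or_gt r p with hrp | hrp
  · have hle := abs_le.mp (SignedPerm.abs_apply_le hu (i := r) (abs_le.mpr ⟨by omega, hrp⟩))
    exact Or.inl ⟨hrp, hz.2.1 r h1 hrp, hle⟩
  · have hne := SignedPerm.apply_ne_zero hv (i := r - p) (by omega)
    rw [hz.2.2 r hrp (by omega), shiftFun]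
    split_ifs <;> omega

variable (hξ : IsShuffle p q ξ) (hu : u ∈ SignedPerm p) (hv : v ∈ SignedPerm q)
  (hz : IsSProd p q u v z)
include hu hv hz

lemma NegaSet_sprod : NegaSet (p + q) z = NegaSet p u ∪ shiftIdx p (NegaSet q v) := by
  ext r
  simp only [mem_union, mem_NegaSet, mem_shiftIdx]
  by_cases hr : 1 ≤ r ∧ r ≤ ↑(p + q)
  · rcases hz.apply_cases hu hv hr.1 hr.2 with h | h | h <;> omega
  · omega

include hξ

lemma InvSet_sprod_shuffle :
    (Icc (1 : ℤ) ↑(p + q) ×ˢ Icc (1 : ℤ) ↑(p + q)).filter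
        (fun rs => ξ rs.1 < ξ rs.2 ∧ z rs.2 < z rs.1) =
      InvSet p u ∪ shiftPr p (InvSet q v) ∪
        ((Icc (1 : ℤ) p ×ˢ shiftIdx p (NegaSet q v)) ∩ OInvSet (p + q) ξ) ∪
        ((shiftIdx p (NegaBar q v) ×ˢ Icc (1 : ℤ) p) ∩ TInvSet (p + q) ξ) := by
  ext ⟨r, s⟩
  simp only [mem_filter, mem_product, mem_Icc, mem_union, mem_inter, mem_InvSet, mem_shiftPr,
    mem_shiftIdx, mem_NegaSet, mem_NegaBar, mem_OInvSet, mem_TInvSet]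
  by_cases hr : 1 ≤ r ∧ r ≤ ↑(p + q); swap; · omega
  by_cases hs : 1 ≤ s ∧ s ≤ ↑(p + q); swap; · omega
  have hmono := hξ.apply_lt_apply_iff hr hs
  have hinj := ξ.injective.eq_iff (a := r) (b := s)
  rcases hz.apply_cases hu hv hr.1 hr.2 with hzr | hzr | hzr <;>
    rcases hz.apply_cases hu hv hs.1 hs.2 with hzs | hzs | hzs <;> omega

lemma NspSet_sprod_shuffle :
    (Icc (1 : ℤ) ↑(p + q) ×ˢ Icc (1 : ℤ) ↑(p + q)).filter
        (fun rs => ξ rs.1 < ξ rs.2 ∧ z rs.1 + z rs.2 < 0) =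
      NspSet p u ∪ shiftPr p (NspSet q v) ∪
        ((Icc (1 : ℤ) p ×ˢ shiftIdx p (NegaSet q v)) ∩ OInvSet (p + q) ξ) ∪
        ((shiftIdx p (NegaSet q v) ×ˢ Icc (1 : ℤ) p) ∩ TInvSet (p + q) ξ) := by
  ext ⟨r, s⟩
  simp only [mem_filter, mem_product, mem_Icc, mem_union, mem_inter, mem_NspSet, mem_InvSet,
    mem_shiftPr, mem_shiftIdx, mem_NegaSet, mem_OInvSet, mem_TInvSet]
  by_cases hr : 1 ≤ r ∧ r ≤ ↑(p + q); swap; · omega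
  by_cases hs : 1 ≤ s ∧ s ≤ ↑(p + q); swap; · omega
  have hmono := hξ.apply_lt_apply_iff hr hs
  have hinj := ξ.injective.eq_iff (a := r) (b := s)
  rcases hz.apply_cases hu hv hr.1 hr.2 with hzr | hzr | hzr <;>
    rcases hz.apply_cases hu hv hs.1 hs.2 with hzs | hzs | hzs <;> omega

end ShuffledProduct

/-- Disjoint-union descriptions of `Nega`, `Inv` and `Nsp` of
`w = (u × v) ξ⁻¹` for a `(p,q)`-shuffle `ξ`, `u ∈ 𝔅_p`, `v ∈ 𝔅_q`. -/
theorem inv_nega_nsp_of_shuffled_sprod (p q : ℕ) (ξ u v z w : Equiv.Perm ℤ)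
    (hξ : IsShuffle p q ξ) (hu : u ∈ SignedPerm p) (hv : v ∈ SignedPerm q)
    (hz : IsSProd p q u v z) (hw : w = z * ξ⁻¹) :
    let N1 := idxImg ξ (NegaSet p u)
    let N2 := idxImg ξ (shiftIdx p (NegaSet q v))
    let I1 := prImg ξ (InvSet p u)
    let I2 := prImg ξ (shiftPr p (InvSet q v))
    let I3 := prImg ξ
      (((Finset.Icc (1 : ℤ) (p : ℤ)) ×ˢ shiftIdx p (NegaSet q v)) ∩ OInvSet (p + q) ξ)
    let I4 := prImg ξ
      ((shiftIdx p (NegaBar q v) ×ˢ (Finset.Icc (1 : ℤ) (p : ℤ))) ∩ TInvSet (p + q) ξ)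
    let S1 := prImg ξ (NspSet p u)
    let S2 := prImg ξ (shiftPr p (NspSet q v))
    let S4 := prImg ξ
      ((shiftIdx p (NegaSet q v) ×ˢ (Finset.Icc (1 : ℤ) (p : ℤ))) ∩ TInvSet (p + q) ξ)
    (NegaSet (p + q) w = N1 ∪ N2 ∧ Disjoint N1 N2) ∧
    (InvSet (p + q) w = I1 ∪ I2 ∪ I3 ∪ I4 ∧
      Disjoint I1 I2 ∧ Disjoint I1 I3 ∧ Disjoint I1 I4 ∧
      Disjoint I2 I3 ∧ Disjoint I2 I4 ∧ Disjoint I3 I4) ∧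
    (NspSet (p + q) w = S1 ∪ S2 ∪ I3 ∪ S4 ∧
      Disjoint S1 S2 ∧ Disjoint S1 I3 ∧ Disjoint S1 S4 ∧
      Disjoint S2 I3 ∧ Disjoint S2 S4 ∧ Disjoint I3 S4) := by
  intro N1 N2 I1 I2 I3 I4 S1 S2 S4
  subst hw
  rw [NegaSet_mul_inv hξ.apply_mem_Icc_iff, NegaSet_sprod hu hv hz,
    InvSet_mul_inv hξ.apply_mem_Icc_iff, InvSet_sprod_shuffle hξ hu hv hz,
    NspSet_mul_inv hξ.apply_mem_Icc_iff, NspSet_sprod_shuffle hξ hu hv hz]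
  simp only [N1, N2, I1, I2, I3, I4, S1, S2, S4, idxImg_union, prImg_union, disjoint_idxImg_iff,
    disjoint_prImg_iff, true_and]
  -- each piece lies in one block of `[1, p] ∪ (p, p + q]` in each coordinate
  simp only [disjoint_left, Prod.forall, mem_inter, mem_product, mem_Icc, mem_InvSet,
    mem_NspSet, mem_shiftPr, mem_shiftIdx, mem_NegaSet, mem_NegaBar, mem_OInvSet, mem_TInvSet]
  and_intros <;> intros <;> omega
end
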